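/- arXiv:1609.07261 — 3 statements merged into one kernel-verified Lean document; each statement's English description precedes it below -/
import Mathlib

section
/- Let γ : [s,s'] → ℝ^r (r ≥ 2) be Lipschitz with |γ'| = 1 a.e. Define Exc(γ) := inf over unit vectors v of (⨍_s^{s'} ⟨v, γ'(t)⟩² dt)^{1/2}. Then (s'-s)·Exc(γ)² ≤ 2((s'-s) - |γ(s')-γ(s)|). -/
open MeasureTheory Set
open scoped RealInnerProductSpace

/-!
Let `w` be the unit vector in the direction of `γ s' - γ s` and `v` a unit vector orthogonal to
`w`. For a unit vector `u`, Bessel's inequality gives `⟪v, u⟫² ≤ 1 - ⟪w, u⟫² ≤ 2 (1 - ⟪w, u⟫)`.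
Applying this to `u = γ'(t)` and integrating, the fundamental theorem of calculus for the
Lipschitz function `⟪w, γ⟫` turns `∫ ⟪w, γ'⟫` into `‖γ s' - γ s‖`, so
`∫ ⟪v, γ'⟫² ≤ 2 ((s' - s) - ‖γ s' - γ s‖)`, and the excess is at most the average on the left.
-/

section

variable {E : Type*} [NormedAddCommGroup E] [InnerProductSpace ℝ E]

theorem inner_sq_add_inner_sq_le_norm_sq {u v w : E} (hv : ‖v‖ ≤ 1) (hw : ‖w‖ ≤ 1)
    (hvw : ⟪v, w⟫ = 0) : ⟪v, u⟫ ^ 2 + ⟪w, u⟫ ^ 2 ≤ ‖u‖ ^ 2 := by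
  have h := real_inner_self_nonneg (x := u - ⟪v, u⟫ • v - ⟪w, u⟫ • w)
  simp only [inner_sub_left, inner_sub_right, real_inner_smul_left, real_inner_smul_right,
    real_inner_self_eq_norm_sq, norm_smul, mul_pow, Real.norm_eq_abs, sq_abs, real_inner_comm u,
    real_inner_comm v w, hvw] at h
  rw [real_inner_comm u, real_inner_comm u]
  nlinarith [mul_le_mul_of_nonneg_left (pow_le_one₀ (n := 2) (norm_nonneg v) hv)
      (sq_nonneg ⟪u, v⟫),
    mul_le_mul_of_nonneg_left (pow_le_one₀ (n := 2) (norm_nonneg w) hw) (sq_nonneg ⟪u, w⟫)]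

theorem inner_sq_le_two_mul_one_sub_inner {u v w : E} (hu : ‖u‖ ≤ 1) (hv : ‖v‖ ≤ 1)
    (hw : ‖w‖ ≤ 1) (hvw : ⟪v, w⟫ = 0) : ⟪v, u⟫ ^ 2 ≤ 2 * (1 - ⟪w, u⟫) := by
  have := inner_sq_add_inner_sq_le_norm_sq (u := u) hv hw hvw
  nlinarith [sq_nonneg (1 - ⟪w, u⟫), norm_nonneg u]

theorem exists_norm_eq_one_inner_eq_zero (h : 2 ≤ Module.finrank ℝ E) (w : E) :
    ∃ v : E, ‖v‖ = 1 ∧ ⟪w, v⟫ = 0 := by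
  have : FiniteDimensional ℝ E := Module.finite_of_finrank_pos (by omega)
  have hspan : (ℝ ∙ w) ≠ ⊤ := fun htop => by
    have := finrank_span_le_card (R := ℝ) ({w} : Set E)
    rw [htop, finrank_top] at this
    simp at this
    omega
  obtain ⟨x, hx, hx0⟩ := Submodule.exists_mem_ne_zero_of_ne_bot
    (mt Submodule.orthogonal_eq_bot_iff.1 hspan)
  exact ⟨(‖x‖⁻¹ : ℝ) • x, norm_smul_inv_norm hx0,
    Submodule.mem_orthogonal_singleton_iff_inner_right.1 (Submodule.smul_mem _ _ hx)⟩

theorem norm_inv_norm_smul_le_one (x : E) : ‖‖x‖⁻¹ • x‖ ≤ 1 := by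
  rw [norm_smul, norm_inv, norm_norm]
  exact inv_mul_le_one_of_le₀ le_rfl (norm_nonneg x)

theorem real_inner_inv_norm_smul_self (x : E) : ⟪‖x‖⁻¹ • x, x⟫ = ‖x‖ := by
  rw [real_inner_smul_left, real_inner_self_eq_norm_sq, sq, ← mul_assoc, inv_mul_mul_self]

variable [FiniteDimensional ℝ E] {K : NNReal} {γ : ℝ → E}

theorem LipschitzWith.intervalIntegrable_comp_deriv {G : Type*} [NormedAddCommGroup G]
    (hγ : LipschitzWith K γ) {F : E → G} (hF : Continuous F) (a b : ℝ) :
    IntervalIntegrable (fun t => F (deriv γ t)) volume a b := by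
  obtain ⟨C, hC⟩ := (isCompact_closedBall (0 : E) K).exists_bound_of_continuousOn
    hF.continuousOn
  refine intervalIntegrable_const.mono_fun' (g := fun _ => C)
    (hF.comp_stronglyMeasurable (stronglyMeasurable_deriv γ)).aestronglyMeasurable
    (Filter.Eventually.of_forall fun t => hC _ ?_)
  simpa using norm_deriv_le_of_lipschitz hγ

theorem LipschitzWith.integral_inner_deriv (hγ : LipschitzWith K γ) (w : E) (a b : ℝ) :
    ∫ t in a..b, ⟪w, deriv γ t⟫ = ⟪w, γ b - γ a⟫ := by
  have hf : LipschitzWith (‖innerSL ℝ w‖₊ * K) fun t => ⟪w, γ t⟫ :=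
    (innerSL ℝ w).lipschitz.comp hγ
  rw [inner_sub_right, ← hf.lipschitzOnWith.absolutelyContinuousOnInterval.integral_deriv_eq_sub]
  refine intervalIntegral.integral_congr_ae ?_
  filter_upwards [hγ.ae_differentiableAt_real] with t ht _
  exact (((innerSL ℝ w).hasFDerivAt.comp_hasDerivAt t ht.hasDerivAt).deriv).symm

theorem LipschitzWith.integral_inner_deriv_sq_le (hγ : LipschitzWith K γ) {a b : ℝ}
    (hab : a ≤ b) (hγ' : ∀ᵐ t ∂volume.restrict (Ioo a b), ‖deriv γ t‖ ≤ 1) {v w : E}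
    (hv : ‖v‖ ≤ 1) (hw : ‖w‖ ≤ 1) (hvw : ⟪v, w⟫ = 0) :
    ∫ t in a..b, ⟪v, deriv γ t⟫ ^ 2 ≤ 2 * ((b - a) - ⟪w, γ b - γ a⟫) := by
  calc ∫ t in a..b, ⟪v, deriv γ t⟫ ^ 2 ≤ ∫ t in a..b, 2 * (1 - ⟪w, deriv γ t⟫) := by
        refine intervalIntegral.integral_mono_ae_restrict hab
          (hγ.intervalIntegrable_comp_deriv (F := fun x => ⟪v, x⟫ ^ 2) (by fun_prop) a b)
          (hγ.intervalIntegrable_comp_deriv (F := fun x => 2 * (1 - ⟪w, x⟫)) (by fun_prop) a b)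
          ?_
        rw [Measure.restrict_congr_set Ioo_ae_eq_Icc.symm]
        filter_upwards [hγ'] with t ht
        exact inner_sq_le_two_mul_one_sub_inner ht hv hw hvw
    _ = 2 * ((b - a) - ⟪w, γ b - γ a⟫) := by
        rw [intervalIntegral.integral_const_mul,
          intervalIntegral.integral_sub intervalIntegrable_const
          (hγ.intervalIntegrable_comp_deriv (F := fun x => ⟪w, x⟫) (by fun_prop) a b),
          hγ.integral_inner_deriv]
        simp

end

theorem sq_ciInf_sqrt_le {ι : Type*} {f : ι → ℝ} (j : ι) (hj : 0 ≤ f j) :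
    (⨅ i, √(f i)) ^ 2 ≤ f j := by
  have hinf : (⨅ i, √(f i)) ≤ √(f j) := ciInf_le ⟨0, by rintro _ ⟨i, rfl⟩; positivity⟩ j
  exact (Real.le_sqrt (Real.iInf_nonneg fun i => Real.sqrt_nonneg _) hj).1 hinf

/-- For a Lipschitz curve `γ : [s,s'] → ℝ^r` (`r ≥ 2`) with `‖γ'‖ = 1` a.e.,
the excess `Exc(γ) := ⨅_{v ∈ S^{r-1}} (⨍_s^{s'} ⟪v, γ'⟫² dt)^{1/2}` satisfies
`(s'-s) · Exc(γ)² ≤ 2 ((s'-s) - ‖γ s' - γ s‖)`. -/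
theorem stmt_1 (r : ℕ) (hr : 2 ≤ r) (γ : ℝ → EuclideanSpace ℝ (Fin r)) (s s' : ℝ)
    (hss : s < s') (K : NNReal) (hlip : LipschitzWith K γ)
    (harc : ∀ᵐ t ∂(volume.restrict (Set.Ioo s s')), ‖deriv γ t‖ = 1) :
    (s' - s) *
      (⨅ v : Metric.sphere (0 : EuclideanSpace ℝ (Fin r)) 1,
        Real.sqrt ((s' - s)⁻¹ * ∫ t in s..s', (⟪(v : EuclideanSpace ℝ (Fin r)), deriv γ t⟫) ^ 2)) ^ 2
      ≤ 2 * ((s' - s) - ‖γ s' - γ s‖) := by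
  have hr' : 2 ≤ Module.finrank ℝ (EuclideanSpace ℝ (Fin r)) := by simpa using hr
  obtain ⟨v, hv, hwv⟩ := exists_norm_eq_one_inner_eq_zero hr' (‖γ s' - γ s‖⁻¹ • (γ s' - γ s))
  have hbound := hlip.integral_inner_deriv_sq_le hss.le (harc.mono fun _ ht => ht.le) hv.le
    (norm_inv_norm_smul_le_one _) (by rwa [real_inner_comm])
  rw [real_inner_inv_norm_smul_self] at hbound
  have hL : 0 < s' - s := sub_pos.2 hss
  have hI : 0 ≤ ∫ t in s..s', ⟪v, deriv γ t⟫ ^ 2 :=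
    intervalIntegral.integral_nonneg hss.le fun _ _ => sq_nonneg _
  calc _ ≤ (s' - s) * ((s' - s)⁻¹ * ∫ t in s..s', ⟪v, deriv γ t⟫ ^ 2) :=
        mul_le_mul_of_nonneg_left (sq_ciInf_sqrt_le
          (⟨v, mem_sphere_zero_iff_norm.2 hv⟩ : Metric.sphere (0 : EuclideanSpace ℝ (Fin r)) 1)
          (by positivity)) hL.le
    _ = ∫ t in s..s', ⟪v, deriv γ t⟫ ^ 2 := mul_inv_cancel_left₀ hL.ne' _
    _ ≤ _ := hbound
end

section
/- Let G be a stratified group with layers 𝔤₁,…,𝔤_s, let γ : [a,b] → G be a curve, [s,s'] ⊆ [a,b] and Y ∈ 𝔤_j with 1 ≤ j < s. Then the endpoint displacement g := γ(b)⁻¹·γ(s)·exp(Y)·γ(s)⁻¹γ(s')·exp(−Y)·γ(s')⁻¹·γ(b) lies in G_{j+1} and π_{j+1}(g) = [Y, π(γ(s')) − π(γ(s))]. -/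
/-!
Write `F i = 𝔤_i ⊕ 𝔤_{i+1} ⊕ ⋯`, so that `G_i = exp (F i)` and `⁅F i, F i'⁆ ⊆ F (i + i')`.
Modulo `F (j + 2)`, conjugation by `exp X` sends `Y ∈ F j` to `Y + ⁅X, Y⁆` and fixes `F (j + 1)`.
With `a, b, c` the logarithms of `γ σ, γ σ', γ b`, the displacement is the conjugate by `exp (-c)`
of `exp (Ad_{exp a} Y) · exp (Ad_{exp b} (-Y))`. The two factors are `≡ ±Y` modulo `F (j + 1)`, so
the bracket in their BCH product gains a layer (which matters for `j = 1`), and the product is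
`≡ ⁅Y, b - a⁆` modulo `F (j + 2)`. The `(j+1)`-layer of `⁅Y, b - a⁆` only sees the first-layer
components of `a` and `b`.
-/

namespace Stratified

theorem displacement_eq_exp {L G : Type*} [Neg L] [Group G] (e : L ≃ G)
    (hinv : ∀ X, (e X)⁻¹ = e (-X)) (μ : L → L → L) (hmul : ∀ X Y, e X * e Y = e (μ X Y))
    (Ad : L → L → L) (hconj : ∀ X Y, e X * e Y * (e X)⁻¹ = e (Ad X Y)) (A B C : G) (Y : L) :
    C⁻¹ * (A * e Y * (A⁻¹ * B) * (e Y)⁻¹ * (B⁻¹ * C)) =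
      e (Ad (-e.symm C) (μ (Ad (e.symm A) Y) (Ad (e.symm B) (-Y)))) := by
  obtain ⟨a, rfl⟩ := e.surjective A
  obtain ⟨b, rfl⟩ := e.surjective B
  obtain ⟨c, rfl⟩ := e.surjective C
  simp only [Equiv.symm_apply_apply]
  calc _ = (e c)⁻¹ * ((e a * e Y * (e a)⁻¹) * (e b * (e Y)⁻¹ * (e b)⁻¹)) * ((e c)⁻¹)⁻¹ := by
        group
    _ = _ := by rw [hinv Y, hconj, hconj, hmul, hinv c, hconj]

/-- The Lie algebra `𝔤_i ⊕ 𝔤_{i+1} ⊕ ⋯` of `G_i`. -/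
def filtration {K L : Type*} [CommRing K] [AddCommGroup L] [Module K L]
    (g : ℕ → Submodule K L) (i : ℕ) : Submodule K L :=
  ⨆ l ∈ Set.Ici i, g l

section Filtration

variable {K L : Type*} [CommRing K] [AddCommGroup L] [Module K L] {g : ℕ → Submodule K L}

theorem filtration_le_iff {i : ℕ} {p : Submodule K L} :
    filtration g i ≤ p ↔ ∀ l, i ≤ l → g l ≤ p :=
  iSup₂_le_iff

theorem mem_filtration_of_mem {i l : ℕ} {x : L} (hil : i ≤ l) (hx : x ∈ g l) :
    x ∈ filtration g i :=
  Submodule.mem_iSup_of_mem l (Submodule.mem_iSup_of_mem hil hx)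

theorem filtration_antitone : Antitone (filtration g) := fun _ _ h =>
  filtration_le_iff.2 fun _ hl _ hx => mem_filtration_of_mem (h.trans hl) hx

theorem filtration_one_eq_top (h0 : g 0 = ⊥) (htop : ⨆ i, g i = ⊤) : filtration g 1 = ⊤ := by
  refine top_unique (htop ▸ iSup_le fun i => ?_)
  rcases Nat.eq_zero_or_pos i with rfl | hi
  · exact h0 ▸ bot_le
  · exact fun _ hx => mem_filtration_of_mem hi hx

theorem mem_filtration_of_smodEq {m : ℕ} {x y : L} (hxy : x ≡ y [SMOD filtration g (m + 1)])
    (hy : y ∈ filtration g m) : x ∈ filtration g m := by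
  simpa using add_mem (filtration_antitone (Nat.le_succ m) (SModEq.sub_mem.1 hxy)) hy

theorem smodEq_of_smodEq_add_of_mem {U : Submodule K L} {x y z : L} (h : x ≡ y + z [SMOD U])
    (hz : z ∈ U) : x ≡ y [SMOD U] := by
  simpa using h.trans ((SModEq.refl y).add (SModEq.zero.2 hz))

theorem map_eq_zero_of_mem_filtration {M : Type*} [AddCommGroup M] [Module K M]
    {q : L →ₗ[K] M} {c m : ℕ} (hq : ∀ i, i ≠ c → ∀ x ∈ g i, q x = 0) (hcm : c < m) {x : L}
    (hx : x ∈ filtration g m) : q x = 0 :=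
  (filtration_le_iff (p := LinearMap.ker q)).2 (fun l hl y hy => hq l (by omega) y hy) hx

theorem map_eq_of_smodEq {M : Type*} [AddCommGroup M] [Module K M]
    {q : L →ₗ[K] M} {c m : ℕ} (hq : ∀ i, i ≠ c → ∀ x ∈ g i, q x = 0) (hcm : c < m) {x y : L}
    (hxy : x ≡ y [SMOD filtration g m]) : q x = q y :=
  sub_eq_zero.1 <| map_sub q x y ▸ map_eq_zero_of_mem_filtration hq hcm (SModEq.sub_mem.1 hxy)

end Filtration

section Lie

variable {K L : Type*} [CommRing K] [LieRing L] [LieAlgebra K L] {g : ℕ → Submodule K L}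

variable (g) in
def LieBracketGraded : Prop :=
  ∀ i j, ∀ x ∈ g i, ∀ y ∈ g j, ⁅x, y⁆ ∈ g (i + j)

theorem lie_mem_filtration (hbr : LieBracketGraded g)
    {i i' : ℕ} {x y : L} (hx : x ∈ filtration g i) (hy : y ∈ filtration g i') :
    ⁅x, y⁆ ∈ filtration g (i + i') := by
  have hlayer : ∀ l, i ≤ l → ∀ z ∈ g l, ⁅z, y⁆ ∈ filtration g (i + i') := fun l hl z hz =>
    (filtration_le_iff (p := (filtration g (i + i')).comap (LieAlgebra.ad K L z))).2
      (fun m hm w hw => mem_filtration_of_mem (add_le_add hl hm) (hbr l m z hz w hw)) hy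
  exact (filtration_le_iff
    (p := (filtration g (i + i')).comap ((LieAlgebra.ad K L : L →ₗ[K] Module.End K L).flip y))).2
    hlayer hx

theorem lie_mem_filtration_of_smodEq_neg
    (hbr : LieBracketGraded g) {j : ℕ} {Y A B : L}
    (hY : Y ∈ filtration g j) (hA : A ≡ Y [SMOD filtration g (j + 1)])
    (hB : B ≡ -Y [SMOD filtration g (j + 1)]) :
    ⁅A, B⁆ ∈ filtration g (j + j + 1) := by
  have hsplit : ⁅A, B⁆ = ⁅A - Y, B⁆ + ⁅Y, B - -Y⁆ := by
    simp only [sub_lie, lie_sub, lie_neg, lie_self, neg_zero, sub_zero, sub_add_cancel]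
  have hB' : B ∈ filtration g j := mem_filtration_of_smodEq hB (neg_mem hY)
  rw [hsplit, add_assoc]
  refine add_mem ?_ (lie_mem_filtration hbr hY (SModEq.sub_mem.1 hB))
  rw [add_comm]
  exact lie_mem_filtration hbr (SModEq.sub_mem.1 hA) hB'

theorem ad_pow_apply_mem_filtration (hbr : LieBracketGraded g)
    {X V : L} {m : ℕ} (hX : X ∈ filtration g 1) (hV : V ∈ filtration g m) (k : ℕ) :
    (LieAlgebra.ad K L X ^ k) V ∈ filtration g (m + k) := by
  induction k with
  | zero => simpa using hV
  | succ k ih =>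
    rw [pow_succ', Module.End.mul_apply, LieAlgebra.ad_apply, ← add_assoc, add_comm _ 1]
    exact lie_mem_filtration hbr hX ih

theorem proj_lie_eq_lie_proj (hbr : LieBracketGraded g)
    (htop : ⨆ i, g i = ⊤) {p q : L →ₗ[K] L} {a b : ℕ}
    (hp : ∀ x ∈ g a, p x = x) (hp' : ∀ i, i ≠ a → ∀ x ∈ g i, p x = 0)
    (hq : ∀ x ∈ g (b + a), q x = x) (hq' : ∀ i, i ≠ b + a → ∀ x ∈ g i, q x = 0)
    {V : L} (hV : V ∈ g b) (X : L) :
    q ⁅V, X⁆ = ⁅V, p X⁆ := by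
  have hlayer : ∀ i, ∀ x ∈ g i, q ⁅V, x⁆ = ⁅V, p x⁆ := by
    intro i x hx
    by_cases hi : i = a
    · subst hi
      rw [hp x hx, hq _ (hbr _ _ V hV x hx)]
    · rw [hp' i hi x hx, lie_zero, hq' _ (by omega) _ (hbr _ _ V hV x hx)]
  have hall : ⨆ i, g i ≤ LinearMap.eqLocus (q ∘ₗ LieAlgebra.ad K L V) (LieAlgebra.ad K L V ∘ₗ p) :=
    iSup_le fun i x hx => hlayer i x hx
  exact hall (htop ▸ Submodule.mem_top)

end Lie

section TruncExpAd

variable {K L : Type*} [Field K] [LieRing L] [LieAlgebra K L] {g : ℕ → Submodule K L}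

variable (K) in
/-- When `(ad X) ^ (n + 1) = 0` this is `Ad (exp X) V`. -/
def truncExpAd (n : ℕ) (X V : L) : L :=
  ∑ k ∈ Finset.range (n + 1), ((k.factorial : K)⁻¹) • ((LieAlgebra.ad K L X ^ k) V)

theorem truncExpAd_smodEq (hbr : LieBracketGraded g)
    {n m : ℕ} (hn : 1 ≤ n) {X V : L} (hX : X ∈ filtration g 1) (hV : V ∈ filtration g m) :
    truncExpAd K n X V ≡ V + ⁅X, V⁆ [SMOD filtration g (m + 2)] := by
  obtain ⟨n, rfl⟩ := Nat.exists_eq_add_of_le' hn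
  rw [SModEq.sub_mem, truncExpAd, Finset.sum_range_succ', Finset.sum_range_succ']
  simp only [zero_add, Nat.factorial_zero, Nat.factorial_one, Nat.cast_one, inv_one, one_smul,
    pow_zero, pow_one, Module.End.one_apply, LieAlgebra.ad_apply]
  rw [add_assoc, add_comm ⁅X, V⁆, add_sub_cancel_right]
  refine Submodule.sum_mem _ fun k _ => Submodule.smul_mem _ _ ?_
  exact filtration_antitone (by omega) (ad_pow_apply_mem_filtration hbr hX hV (k + 1 + 1))

theorem bch_mem_filtration (hbr : LieBracketGraded g)
    {R : L → L → L} (hR : ∀ i i' : ℕ, ∀ X Y : L, X ∈ filtration g i → Y ∈ filtration g i' →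
      R X Y - (2 : K)⁻¹ • ⁅X, Y⁆ ∈ filtration g (i + i' + min i i'))
    {j : ℕ} (hj : 1 ≤ j) {Y A B : L} (hY : Y ∈ filtration g j)
    (hA : A ≡ Y [SMOD filtration g (j + 1)]) (hB : B ≡ -Y [SMOD filtration g (j + 1)]) :
    R A B ∈ filtration g (j + 2) := by
  have hrem := hR j j A B (mem_filtration_of_smodEq hA hY)
    (mem_filtration_of_smodEq hB (neg_mem hY))
  have hlie := lie_mem_filtration_of_smodEq_neg hbr hY hA hB
  rw [← sub_add_cancel (R A B) ((2 : K)⁻¹ • ⁅A, B⁆)]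
  exact add_mem (filtration_antitone (by omega) hrem)
    (Submodule.smul_mem _ _ (filtration_antitone (by omega) hlie))

theorem add_add_bch_smodEq (hbr : LieBracketGraded g)
    {R : L → L → L} (hR : ∀ i i' : ℕ, ∀ X Y : L, X ∈ filtration g i → Y ∈ filtration g i' →
      R X Y - (2 : K)⁻¹ • ⁅X, Y⁆ ∈ filtration g (i + i' + min i i'))
    {j : ℕ} (hj : 1 ≤ j) {Y X₁ X₂ A B : L} (hY : Y ∈ filtration g j)
    (hX₁ : X₁ ∈ filtration g 1) (hX₂ : X₂ ∈ filtration g 1)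
    (hA : A ≡ Y + ⁅X₁, Y⁆ [SMOD filtration g (j + 2)])
    (hB : B ≡ -Y + ⁅X₂, -Y⁆ [SMOD filtration g (j + 2)]) :
    A + B + R A B ≡ ⁅Y, X₂ - X₁⁆ [SMOD filtration g (j + 2)] := by
  have hle : filtration g (j + 2) ≤ filtration g (j + 1) := filtration_antitone (by omega)
  have hAY : A ≡ Y [SMOD filtration g (j + 1)] :=
    smodEq_of_smodEq_add_of_mem (hA.mono hle) (add_comm 1 j ▸ lie_mem_filtration hbr hX₁ hY)
  have hBY : B ≡ -Y [SMOD filtration g (j + 1)] :=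
    smodEq_of_smodEq_add_of_mem (hB.mono hle) (add_comm 1 j ▸ lie_mem_filtration hbr hX₂ (neg_mem hY))
  have := (hA.add hB).add (SModEq.zero.2 (bch_mem_filtration hbr hR hj hY hAY hBY))
  rwa [show Y + ⁅X₁, Y⁆ + (-Y + ⁅X₂, -Y⁆) + 0 = ⁅Y, X₂ - X₁⁆ by
    rw [lie_sub, ← lie_skew X₁, ← lie_skew X₂, neg_lie]; abel] at this

theorem truncExpAd_smodEq_self (hbr : LieBracketGraded g)
    {n m : ℕ} (hn : 1 ≤ n) {X V : L} (hX : X ∈ filtration g 1) (hV : V ∈ filtration g (m + 1)) :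
    truncExpAd K n X V ≡ V [SMOD filtration g (m + 2)] :=
  smodEq_of_smodEq_add_of_mem ((truncExpAd_smodEq hbr hn hX hV).mono (filtration_antitone
    (by omega))) (filtration_antitone (by omega) (lie_mem_filtration hbr hX hV))

end TruncExpAd

end Stratified

open Stratified

theorem stmt_12_general (L : Type*) [LieRing L] [LieAlgebra ℝ L]
    (s : ℕ) (g : ℕ → Submodule ℝ L)
    (hbr : ∀ i j, ∀ x ∈ g i, ∀ y ∈ g j, ⁅x, y⁆ ∈ g (i + j))
    (h0 : g 0 = ⊥)
    (hint : DirectSum.IsInternal g)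
    (G : Type*) [Group G] (e : L ≃ G)
    (hinv : ∀ X : L, (e X)⁻¹ = e (-X))
    (R : L → L → L)
    (hmul : ∀ X Y : L, e X * e Y = e (X + Y + R X Y))
    (hR : ∀ i i' : ℕ, ∀ X Y : L, X ∈ ⨆ l ∈ Set.Ici i, g l → Y ∈ ⨆ l ∈ Set.Ici i', g l →
      R X Y - (2 : ℝ)⁻¹ • ⁅X, Y⁆ ∈ ⨆ l ∈ Set.Ici (i + i' + min i i'), g l)
    (hconj : ∀ X Y : L, e X * e Y * (e X)⁻¹ =
      e (∑ k ∈ Finset.range (s + 1), ((k.factorial : ℝ)⁻¹) • ((LieAlgebra.ad ℝ L X ^ k) Y)))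
    (j : ℕ) (hj1 : 1 ≤ j) (hjs : j < s)
    (p1 : L →ₗ[ℝ] L) (hp1 : ∀ x ∈ g 1, p1 x = x) (hp1' : ∀ i, i ≠ 1 → ∀ x ∈ g i, p1 x = 0)
    (pj1 : L →ₗ[ℝ] L) (hpj1 : ∀ x ∈ g (j + 1), pj1 x = x)
    (hpj1' : ∀ i, i ≠ j + 1 → ∀ x ∈ g i, pj1 x = 0)
    (γ : ℝ → G) (b σ σ' : ℝ)
    (Y : L) (hY : Y ∈ g j) :
    e.symm ((γ b)⁻¹ * (γ σ * e Y * ((γ σ)⁻¹ * γ σ') * (e Y)⁻¹ * ((γ σ')⁻¹ * γ b)))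
        ∈ ⨆ l ∈ Set.Ici (j + 1), g l ∧
      pj1 (e.symm ((γ b)⁻¹ * (γ σ * e Y * ((γ σ)⁻¹ * γ σ') * (e Y)⁻¹ * ((γ σ')⁻¹ * γ b))))
        = ⁅Y, p1 (e.symm (γ σ')) - p1 (e.symm (γ σ))⁆ := by
  have htop := hint.submodule_iSup_eq_top
  have hX : ∀ X : L, X ∈ filtration g 1 := fun X => filtration_one_eq_top h0 htop ▸ trivial
  have hYj : Y ∈ filtration g j := mem_filtration_of_mem le_rfl hY
  have hs : 1 ≤ s := by omega
  have hU := add_add_bch_smodEq hbr hR hj1 hYj (hX _) (hX _)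
    (truncExpAd_smodEq hbr hs (hX (e.symm (γ σ))) hYj)
    (truncExpAd_smodEq hbr hs (hX (e.symm (γ σ'))) (neg_mem hYj))
  have hV := (truncExpAd_smodEq_self hbr hs (hX (-e.symm (γ b)))
    (mem_filtration_of_smodEq hU (lie_mem_filtration hbr hYj (hX _)))).trans hU
  rw [displacement_eq_exp e hinv (fun X Y => X + Y + R X Y) hmul (truncExpAd ℝ s) hconj,
    Equiv.symm_apply_apply]
  refine ⟨mem_filtration_of_smodEq hV (lie_mem_filtration hbr hYj (hX _)), ?_⟩
  rw [map_eq_of_smodEq hpj1' (Nat.lt_succ_self _) hV,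
    proj_lie_eq_lie_proj hbr htop hp1 hp1' hpj1 hpj1' hY, map_sub]

/-- In a stratified group `G` (modelled as in the previous statements by a
group `G`, a stratified Lie algebra `L`, a bijective exponential `e : L ≃ G` with
`e(X)⁻¹ = e(-X)`, `Ad(e X) = e^{ad X}`, and BCH with quantitative remainder), for a curve
`γ : [a,b] → G`, a subinterval `[σ,σ'] ⊆ [a,b]` and `Y ∈ 𝔤_j` with `1 ≤ j < s`, the
endpoint displacement
`d := γ(b)⁻¹·γ(σ)·e(Y)·γ(σ)⁻¹·γ(σ')·e(Y)⁻¹·γ(σ')⁻¹·γ(b)` lies in `G_{j+1} = e(𝔴_{j+1})`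
and `π_{j+1}(d) = ⁅Y, π(γ(σ')) − π(γ(σ))⁆`. -/
theorem stmt_12 (L : Type*) [LieRing L] [LieAlgebra ℝ L]
    (s : ℕ) (g : ℕ → Submodule ℝ L)
    (hbr : ∀ i j, ∀ x ∈ g i, ∀ y ∈ g j, ⁅x, y⁆ ∈ g (i + j))
    (h0 : g 0 = ⊥) (htop : ∀ k, s < k → g k = ⊥)
    (hint : DirectSum.IsInternal g)
    (G : Type*) [Group G] (e : L ≃ G)
    (hinv : ∀ X : L, (e X)⁻¹ = e (-X))
    (R : L → L → L)
    (hmul : ∀ X Y : L, e X * e Y = e (X + Y + R X Y))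
    (hR : ∀ i i' : ℕ, ∀ X Y : L, X ∈ ⨆ l ∈ Set.Ici i, g l → Y ∈ ⨆ l ∈ Set.Ici i', g l →
      R X Y - (2 : ℝ)⁻¹ • ⁅X, Y⁆ ∈ ⨆ l ∈ Set.Ici (i + i' + min i i'), g l)
    (hconj : ∀ X Y : L, e X * e Y * (e X)⁻¹ =
      e (∑ k ∈ Finset.range (s + 1), ((k.factorial : ℝ)⁻¹) • ((LieAlgebra.ad ℝ L X ^ k) Y)))
    (j : ℕ) (hj1 : 1 ≤ j) (hjs : j < s)
    (p1 : L →ₗ[ℝ] L) (hp1 : ∀ x ∈ g 1, p1 x = x) (hp1' : ∀ i, i ≠ 1 → ∀ x ∈ g i, p1 x = 0)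
    (pj1 : L →ₗ[ℝ] L) (hpj1 : ∀ x ∈ g (j + 1), pj1 x = x)
    (hpj1' : ∀ i, i ≠ j + 1 → ∀ x ∈ g i, pj1 x = 0)
    (γ : ℝ → G) (a b σ σ' : ℝ) (haσ : a ≤ σ) (hσσ : σ ≤ σ') (hσb : σ' ≤ b)
    (Y : L) (hY : Y ∈ g j) :
    e.symm ((γ b)⁻¹ * (γ σ * e Y * ((γ σ)⁻¹ * γ σ') * (e Y)⁻¹ * ((γ σ')⁻¹ * γ b)))
        ∈ ⨆ l ∈ Set.Ici (j + 1), g l ∧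
      pj1 (e.symm ((γ b)⁻¹ * (γ σ * e Y * ((γ σ)⁻¹ * γ σ') * (e Y)⁻¹ * ((γ σ')⁻¹ * γ b))))
        = ⁅Y, p1 (e.symm (γ σ')) - p1 (e.symm (γ σ))⁆ :=
  stmt_12_general L s g hbr h0 hint G e hinv R hmul hR hconj j hj1 hjs p1 hp1 hp1' pj1 hpj1 hpj1' γ
    b σ σ' Y hY
end

section
/- Let γ : [0,1] → ℝ^r be Lipschitz with |γ'| ≤ 1 a.e., and suppose that for all 0 ≤ a₁ < b₁ ≤ a₂ < b₂ ≤ ⋯ ≤ a_r < b_r ≤ 1 one has det(γ(b₁)−γ(a₁), …, γ(b_r)−γ(a_r)) = 0. Then the derivatives γ'(t), taken over all points of differentiability t ∈ (0,1), span a linear subspace of dimension strictly less than r; hence there is a unit vector v with ⟨v, γ'(t)⟩ = 0 for a.e. t. -/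
open MeasureTheory Set Filter Topology
open scoped RealInnerProductSpace

/-!
If the derivatives spanned `ℝ^r`, there would be differentiability points `t₁ < ⋯ < t_r` with
linearly independent derivatives. For small `δ > 0` the intervals `[tᵢ, tᵢ + δ]` are interlaced
as in the hypothesis, so the determinant of the difference quotients `(γ(tᵢ + δ) - γ(tᵢ)) / δ`
vanishes; letting `δ → 0` gives `det (γ'(t₁), …, γ'(t_r)) = 0`, a contradiction. A unit normal
to the span is then orthogonal to `deriv γ t` for every `t`, since `deriv γ t = 0` wherever `γ`
is not differentiable.
-/

theorem exists_linearIndependent_fin_of_le_finrank_span {K V : Type*} [DivisionRing K]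
    [AddCommGroup V] [Module K V] {s : Set V} {r : ℕ}
    (h : r ≤ Module.finrank K (Submodule.span K s)) :
    ∃ v : Fin r → V, LinearIndependent K v ∧ ∀ i, v i ∈ s := by
  obtain ⟨b, hbs, hspan, hind⟩ := exists_linearIndependent K s
  have hr : (r : Cardinal) ≤ Cardinal.mk b := by
    rw [← rank_span_set hind, hspan]
    rcases Nat.eq_zero_or_pos r with rfl | hpos
    · simp
    have := Module.finite_of_finrank_pos (hpos.trans_le h)
    rw [← Module.finrank_eq_rank]
    exact_mod_cast h
  obtain ⟨e⟩ : Nonempty (Fin r ↪ b) := Cardinal.lift_mk_le'.mp (by simpa using hr)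
  exact ⟨fun i => e i, hind.comp e e.injective, fun i => hbs (e i).2⟩

theorem EuclideanSpace.det_cols_ne_zero_of_linearIndependent {ι : Type*} [Fintype ι] [DecidableEq ι]
    {v : ι → EuclideanSpace ℝ ι} (hv : LinearIndependent ℝ v) :
    (Matrix.of fun i j => v j i).det ≠ 0 := by
  rw [← isUnit_iff_ne_zero, ← Matrix.isUnit_iff_isUnit_det,
    ← Matrix.linearIndependent_cols_iff_isUnit]
  exact hv.map' (WithLp.linearEquiv 2 ℝ (ι → ℝ)).toLinearMap (LinearEquiv.ker _)

theorem det_deriv_eq_zero_of_eventually_det_sub_eq_zero {ι : Type*} [Fintype ι] [DecidableEq ι]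
    {γ : ℝ → EuclideanSpace ℝ ι} {t : ι → ℝ} (hγ : ∀ j, DifferentiableAt ℝ γ (t j))
    (h : ∀ᶠ δ in 𝓝[>] 0, (Matrix.of fun i j => (γ (t j + δ) - γ (t j)) i).det = 0) :
    (Matrix.of fun i j => deriv γ (t j) i).det = 0 := by
  have hcont : Continuous fun w : ι → EuclideanSpace ℝ ι => (Matrix.of fun i j => w j i).det := by
    fun_prop
  have hslope : Tendsto (fun δ : ℝ => fun j => δ⁻¹ • (γ (t j + δ) - γ (t j))) (𝓝[>] 0)
      (𝓝 fun j => deriv γ (t j)) :=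
    tendsto_pi_nhds.mpr fun j => (hγ j).hasDerivAt.tendsto_slope_zero_right
  refine tendsto_nhds_unique ((hcont.tendsto _).comp hslope) (tendsto_const_nhds.congr' ?_)
  filter_upwards [h] with δ hδ
  have hsmul : (Matrix.of fun i j => (δ⁻¹ • (γ (t j + δ) - γ (t j))) i)
      = δ⁻¹ • Matrix.of fun i j => (γ (t j + δ) - γ (t j)) i := by
    ext; simp
  change 0 = (Matrix.of fun i j => (δ⁻¹ • (γ (t j + δ) - γ (t j))) i).det
  rw [hsmul, Matrix.det_smul, hδ, mul_zero]

theorem eventually_add_le_of_strictMono {r : ℕ} {t : Fin r → ℝ} (ht : StrictMono t)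
    (ht1 : ∀ i, t i < 1) :
    ∀ᶠ δ in 𝓝[>] (0 : ℝ), (∀ (i : Fin r) (h : (i : ℕ) + 1 < r), t i + δ ≤ t ⟨i + 1, h⟩) ∧
      ∀ i, t i + δ ≤ 1 := by
  have hsmall : ∀ {c : ℝ}, 0 < c → ∀ᶠ δ in 𝓝[>] (0 : ℝ), δ ≤ c := fun hc =>
    nhdsWithin_le_nhds (eventually_le_nhds hc)
  refine (eventually_all.mpr fun i => ?_).and (eventually_all.mpr fun i => ?_)
  · by_cases h : (i : ℕ) + 1 < r
    · filter_upwards [hsmall (sub_pos.mpr (ht (show i < ⟨i + 1, h⟩ by simp [Fin.lt_def])))]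
        with δ hδ
      intro _; linarith
    · exact Eventually.of_forall fun _ h' => absurd h' h
  · filter_upwards [hsmall (sub_pos.mpr (ht1 i))] with δ hδ
    linarith

theorem Submodule.exists_norm_eq_one_forall_inner_eq_zero {E : Type*} [NormedAddCommGroup E]
    [InnerProductSpace ℝ E] [FiniteDimensional ℝ E] {S : Submodule ℝ E}
    (hS : Module.finrank ℝ S < Module.finrank ℝ E) :
    ∃ v : E, ‖v‖ = 1 ∧ ∀ x ∈ S, ⟪v, x⟫ = 0 := by
  have hne : Sᗮ ≠ ⊥ := by
    rw [Ne, Submodule.orthogonal_eq_bot_iff]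
    rintro rfl
    simp at hS
  obtain ⟨x, hxS, hx0⟩ := Submodule.exists_mem_ne_zero_of_ne_bot hne
  refine ⟨‖x‖⁻¹ • x, norm_smul_inv_norm hx0, fun y hy => ?_⟩
  rw [real_inner_comm]
  exact (Submodule.mem_orthogonal S _).mp (Sᗮ.smul_mem _ hxS) y hy

theorem stmt_17_general (r : ℕ) (γ : ℝ → EuclideanSpace ℝ (Fin r))
    (hdet : ∀ a b : Fin r → ℝ,
      (∀ i, a i < b i) →
      (∀ i : Fin r, ∀ h : (i : ℕ) + 1 < r, b i ≤ a ⟨(i : ℕ) + 1, h⟩) →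
      (∀ i, 0 ≤ a i) → (∀ i, b i ≤ 1) →
      Matrix.det (Matrix.of fun i j : Fin r => (γ (b j) - γ (a j)) i) = 0) :
    Module.finrank ℝ (Submodule.span ℝ
        {x : EuclideanSpace ℝ (Fin r) |
          ∃ t ∈ Set.Ioo (0 : ℝ) 1, DifferentiableAt ℝ γ t ∧ deriv γ t = x}) < r ∧
    ∃ v : EuclideanSpace ℝ (Fin r), ‖v‖ = 1 ∧
      ∀ᵐ t ∂(volume.restrict (Set.Ioo (0 : ℝ) 1)), ⟪v, deriv γ t⟫ = 0 := by
  set S := Submodule.span ℝ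
    {x : EuclideanSpace ℝ (Fin r) | ∃ t ∈ Ioo (0 : ℝ) 1, DifferentiableAt ℝ γ t ∧ deriv γ t = x}
  have hS : Module.finrank ℝ S < r := by
    by_contra! hr
    obtain ⟨w, hw, hwS⟩ := exists_linearIndependent_fin_of_le_finrank_span hr
    choose τ hτ hτγ hτw using hwS
    have hderiv : deriv γ ∘ τ = w := funext hτw
    set t := τ ∘ Tuple.sort τ
    have ht : StrictMono t := (Tuple.monotone_sort τ).strictMono_of_injective
      ((hderiv ▸ hw.injective).of_comp.comp (Equiv.injective _))
    have hind : LinearIndependent ℝ (deriv γ ∘ t) := by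
      rw [show deriv γ ∘ t = w ∘ Tuple.sort τ by rw [← hderiv]; rfl]
      exact hw.comp _ (Equiv.injective _)
    refine EuclideanSpace.det_cols_ne_zero_of_linearIndependent hind
      (det_deriv_eq_zero_of_eventually_det_sub_eq_zero (fun j => hτγ _) ?_)
    filter_upwards [eventually_mem_nhdsWithin, eventually_add_le_of_strictMono ht fun i => (hτ _).2]
      with δ hδ ⟨hδt, hδ1⟩
    exact hdet t (fun j => t j + δ) (fun j => lt_add_of_pos_right _ hδ) hδt
      (fun j => (hτ _).1.le) hδ1
  refine ⟨hS, ?_⟩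
  obtain ⟨v, hv, hvS⟩ := S.exists_norm_eq_one_forall_inner_eq_zero (by simpa using hS)
  refine ⟨v, hv, ae_restrict_of_forall_mem measurableSet_Ioo fun t ht => ?_⟩
  by_cases hγ : DifferentiableAt ℝ γ t
  · exact hvS _ (Submodule.subset_span ⟨t, ht, hγ, rfl⟩)
  · rw [deriv_zero_of_not_differentiableAt hγ, inner_zero_right]

/-- Let `γ : [0,1] → ℝ^r` be Lipschitz with `‖γ'‖ ≤ 1` a.e. If for all
`0 ≤ a₁ < b₁ ≤ a₂ < b₂ ≤ ⋯ ≤ a_r < b_r ≤ 1` one has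
`det (γ(b₁)−γ(a₁), …, γ(b_r)−γ(a_r)) = 0`, then the derivatives `γ'(t)` (over all
differentiability points `t ∈ (0,1)`) span a subspace of dimension `< r`; hence there is a
unit vector `v` with `⟪v, γ'(t)⟫ = 0` for a.e. `t ∈ (0,1)`. -/
theorem stmt_17 (r : ℕ) (hr : 0 < r) (γ : ℝ → EuclideanSpace ℝ (Fin r))
    (K : NNReal) (hlip : LipschitzWith K γ)
    (hderiv : ∀ᵐ t ∂(volume.restrict (Set.Ioo (0 : ℝ) 1)), ‖deriv γ t‖ ≤ 1)
    (hdet : ∀ a b : Fin r → ℝ,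
      (∀ i, a i < b i) →
      (∀ i : Fin r, ∀ h : (i : ℕ) + 1 < r, b i ≤ a ⟨(i : ℕ) + 1, h⟩) →
      (∀ i, 0 ≤ a i) → (∀ i, b i ≤ 1) →
      Matrix.det (Matrix.of fun i j : Fin r => (γ (b j) - γ (a j)) i) = 0) :
    Module.finrank ℝ (Submodule.span ℝ
        {x : EuclideanSpace ℝ (Fin r) |
          ∃ t ∈ Set.Ioo (0 : ℝ) 1, DifferentiableAt ℝ γ t ∧ deriv γ t = x}) < r ∧
    ∃ v : EuclideanSpace ℝ (Fin r), ‖v‖ = 1 ∧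
      ∀ᵐ t ∂(volume.restrict (Set.Ioo (0 : ℝ) 1)), ⟪v, deriv γ t⟫ = 0 :=
  stmt_17_general r γ hdet
end
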